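/- arXiv:1901.08794 — 3 statements merged into one kernel-verified Lean document; each statement's English description precedes it below -/
import Mathlib

section
/- Let (x_t, y_t) be sequences in E and F respectively and E_t > 0 a sequence of reals. Suppose for every t ≥ 0: (i) ∇_y f(x_t, y_t) = 0, (ii) f(x_t, y_t) − f(x_{t+1}, y_t) ≥ (1/(2·E_t))·‖∇_x f(x_t, y_t)‖², and (iii) f(x_{t+1}, y_{t+1}) ≤ f(x_{t+1}, y_t). Let T ≥ 1 and let E* be an upper bound for E_t over t = 0, …, T−1. Then min over t ∈ {0, …, T−1} of ‖∇ f(x_t, y_t)‖² is at most 2·E*·(f(x_0, y_0) − f(x_T, y_T))/T. In particular the minimal gradient norm over the first T iterations is O(1/√T). -/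
/-- O(1/√T) rate of Theorem 1: the minimum squared gradient norm over the
first `T` iterations is at most `2 E* (f(x₀,y₀) − f(x_T,y_T)) / T`. -/
theorem two_block_rate
    {E F : Type*} [NormedAddCommGroup E] [InnerProductSpace ℝ E] [CompleteSpace E]
    [NormedAddCommGroup F] [InnerProductSpace ℝ F] [CompleteSpace F]
    (f : E × F → ℝ) (hf : Differentiable ℝ f)
    (x : ℕ → E) (y : ℕ → F) (Et : ℕ → ℝ) (hE : ∀ t, 0 < Et t)
    (h1 : ∀ t, gradient (fun y' => f (x t, y')) (y t) = 0)
    (h2 : ∀ t, f (x t, y t) - f (x (t + 1), y t) ≥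
      (1 / (2 * Et t)) * ‖gradient (fun x' => f (x', y t)) (x t)‖ ^ 2)
    (h3 : ∀ t, f (x (t + 1), y (t + 1)) ≤ f (x (t + 1), y t))
    (T : ℕ) (hT : 1 ≤ T)
    (Estar : ℝ) (hEstar : ∀ t < T, Et t ≤ Estar) :
    (Finset.range T).inf' (Finset.nonempty_range_iff.mpr (by omega))
        (fun t =>
          ‖gradient (fun x' => f (x', y t)) (x t)‖ ^ 2 +
            ‖gradient (fun y' => f (x t, y')) (y t)‖ ^ 2) ≤
      2 * Estar * (f (x 0, y 0) - f (x T, y T)) / T := by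
  have hne : (Finset.range T).Nonempty := Finset.nonempty_range_iff.mpr (by omega)
  set g : ℕ → ℝ := fun t =>
    ‖gradient (fun x' => f (x', y t)) (x t)‖ ^ 2 +
      ‖gradient (fun y' => f (x t, y')) (y t)‖ ^ 2 with hg
  set m := (Finset.range T).inf' hne g with hm
  have hEstarpos : 0 < Estar := lt_of_lt_of_le (hE 0) (hEstar 0 (by omega))
  -- m ≥ 0
  obtain ⟨t₀, ht₀, hmt₀⟩ := Finset.exists_mem_eq_inf' hne g
  have hm0 : 0 ≤ m := by
    rw [hm, hmt₀]; positivity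
  -- each step decreases f by at least m/(2 Estar)
  have key : ∀ t < T, m / (2 * Estar) ≤ f (x t, y t) - f (x (t + 1), y (t + 1)) := by
    intro t ht
    have hmg : m ≤ g t := Finset.inf'_le g (Finset.mem_range.mpr ht)
    have hgt : g t = ‖gradient (fun x' => f (x', y t)) (x t)‖ ^ 2 := by
      rw [hg]; simp [h1 t]
    have h2t := h2 t
    have h3t := h3 t
    have hEt := hE t
    have hle : Et t ≤ Estar := hEstar t ht
    have hstep : m / (2 * Estar) ≤ (1 / (2 * Et t)) * g t := by
      rw [div_le_iff₀ (by positivity)]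
      have h1' : (1 / (2 * Et t)) * g t * (2 * Estar) = g t * (Estar / Et t) := by
        field_simp
      rw [h1']
      have : (1 : ℝ) ≤ Estar / Et t := (one_le_div hEt).mpr hle
      nlinarith [hmg, hm0, le_trans hm0 hmg]
    calc m / (2 * Estar) ≤ (1 / (2 * Et t)) * g t := hstep
      _ = (1 / (2 * Et t)) * ‖gradient (fun x' => f (x', y t)) (x t)‖ ^ 2 := by rw [hgt]
      _ ≤ f (x t, y t) - f (x (t + 1), y t) := h2t
      _ ≤ f (x t, y t) - f (x (t + 1), y (t + 1)) := by linarith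
  -- telescoping sum
  have hsum : ∑ t ∈ Finset.range T, (f (x t, y t) - f (x (t + 1), y (t + 1)))
      = f (x 0, y 0) - f (x T, y T) := by
    exact Finset.sum_range_sub' (fun t => f (x t, y t)) T
  have hTsum : (T : ℝ) * (m / (2 * Estar)) ≤ f (x 0, y 0) - f (x T, y T) := by
    rw [← hsum]
    calc (T : ℝ) * (m / (2 * Estar))
        = ∑ _t ∈ Finset.range T, m / (2 * Estar) := by
          rw [Finset.sum_const, Finset.card_range, nsmul_eq_mul]
      _ ≤ ∑ t ∈ Finset.range T, (f (x t, y t) - f (x (t + 1), y (t + 1))) := by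
          apply Finset.sum_le_sum
          intro t ht
          exact key t (Finset.mem_range.mp ht)
  have hTpos : (0 : ℝ) < T := by exact_mod_cast hT
  rw [hm, hmt₀, ← hmt₀, ← hm, le_div_iff₀ hTpos]
  rw [← mul_div_assoc] at hTsum
  have h' : (T : ℝ) * m ≤ (f (x 0, y 0) - f (x T, y T)) * (2 * Estar) :=
    (div_le_iff₀ (by positivity)).mp hTsum
  linarith
end

section
/- Let (x_t, y_t) be sequences in E and F respectively and E_t a sequence of reals with 0 < E_t ≤ E* for all t and a fixed E* > 0. Suppose for every t ≥ 0: (i) ∇_y f(x_t, y_t) = 0, (ii) f(x_t, y_t) − f(x_{t+1}, y_t) ≥ (1/(2·E_t))·‖∇_x f(x_t, y_t)‖², and (iii) f(x_{t+1}, y_{t+1}) ≤ f(x_{t+1}, y_t). If in addition f is bounded from below, then ‖∇ f(x_t, y_t)‖ → 0 as t → ∞. -/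
/- The values `f (xₜ, yₜ)` decrease by at least `‖∇ₓ f(xₜ, yₜ)‖² / (2 E*)` per step, the `y`-update
being a descent step. Being bounded below they converge, so the decrements, and with them
`‖∇ₓ f‖²`, tend to zero; `∇_y f(xₜ, yₜ)` vanishes identically. -/

open Filter Topology

theorem Antitone.tendsto_sub_succ_zero {a : ℕ → ℝ} (ha : Antitone a)
    (hbdd : BddBelow (Set.range a)) :
    Tendsto (fun t => a t - a (t + 1)) atTop (𝓝 0) := by
  have hconv := tendsto_atTop_ciInf ha hbdd
  simpa using hconv.sub (hconv.comp (tendsto_add_atTop_nat 1))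

theorem Antitone.tendsto_zero_of_le_mul_sub_succ {a g : ℕ → ℝ} (C : ℝ) (ha : Antitone a)
    (hbdd : BddBelow (Set.range a)) (hg : ∀ t, 0 ≤ g t)
    (hle : ∀ t, g t ≤ C * (a t - a (t + 1))) :
    Tendsto g atTop (𝓝 0) := by
  refine squeeze_zero hg hle ?_
  simpa using (ha.tendsto_sub_succ_zero hbdd).const_mul C

theorem two_block_gradient_tendsto_zero_general
    {E F : Type*} [NormedAddCommGroup E] [InnerProductSpace ℝ E] [CompleteSpace E]
    [NormedAddCommGroup F] [InnerProductSpace ℝ F] [CompleteSpace F]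
    (f : E × F → ℝ)
    (x : ℕ → E) (y : ℕ → F) (Et : ℕ → ℝ)
    (Estar : ℝ)
    (hE : ∀ t, 0 < Et t ∧ Et t ≤ Estar)
    (h1 : ∀ t, gradient (fun y' => f (x t, y')) (y t) = 0)
    (h2 : ∀ t, f (x t, y t) - f (x (t + 1), y t) ≥
      (1 / (2 * Et t)) * ‖gradient (fun x' => f (x', y t)) (x t)‖ ^ 2)
    (h3 : ∀ t, f (x (t + 1), y (t + 1)) ≤ f (x (t + 1), y t))
    (hbdd : ∃ B : ℝ, ∀ p : E × F, B ≤ f p) :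
    Filter.Tendsto
      (fun t =>
        Real.sqrt
          (‖gradient (fun x' => f (x', y t)) (x t)‖ ^ 2 +
            ‖gradient (fun y' => f (x t, y')) (y t)‖ ^ 2))
      Filter.atTop (nhds 0) := by
  obtain ⟨B, hB⟩ := hbdd
  set a : ℕ → ℝ := fun t => f (x t, y t)
  set g : ℕ → ℝ := fun t => ‖gradient (fun x' => f (x', y t)) (x t)‖ ^ 2
  have hg : ∀ t, 0 ≤ g t := fun t => sq_nonneg _
  have hstep : ∀ t, g t / (2 * Et t) ≤ a t - a (t + 1) := fun t => by
    rw [div_eq_mul_one_div, mul_comm]; linarith [h2 t, h3 t]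
  have hdec : ∀ t, 0 ≤ a t - a (t + 1) := fun t =>
    (div_nonneg (hg t) (by linarith [(hE t).1])).trans (hstep t)
  have hanti : Antitone a := antitone_nat_of_succ_le fun t => by linarith [hdec t]
  have hle : ∀ t, g t ≤ 2 * Estar * (a t - a (t + 1)) := fun t => by
    obtain ⟨hpos, hmax⟩ := hE t
    calc g t = 2 * Et t * (g t / (2 * Et t)) := by field_simp
      _ ≤ 2 * Et t * (a t - a (t + 1)) := by gcongr; exact hstep t
      _ ≤ 2 * Estar * (a t - a (t + 1)) := by gcongr; exact hdec t
  have hg0 := hanti.tendsto_zero_of_le_mul_sub_succ _ ⟨B, by rintro _ ⟨t, rfl⟩; exact hB _⟩ hg hle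
  simpa [h1, g, Function.comp_def] using (Real.continuous_sqrt.tendsto 0).comp hg0

/-- Vanishing-gradient conclusion of Theorem 1: if `f` is bounded below and
`0 < Eₜ ≤ E*`, then `‖∇ f(xₜ, yₜ)‖ → 0`. -/
theorem two_block_gradient_tendsto_zero
    {E F : Type*} [NormedAddCommGroup E] [InnerProductSpace ℝ E] [CompleteSpace E]
    [NormedAddCommGroup F] [InnerProductSpace ℝ F] [CompleteSpace F]
    (f : E × F → ℝ) (hf : Differentiable ℝ f)
    (x : ℕ → E) (y : ℕ → F) (Et : ℕ → ℝ)
    (Estar : ℝ) (hEstar : 0 < Estar)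
    (hE : ∀ t, 0 < Et t ∧ Et t ≤ Estar)
    (h1 : ∀ t, gradient (fun y' => f (x t, y')) (y t) = 0)
    (h2 : ∀ t, f (x t, y t) - f (x (t + 1), y t) ≥
      (1 / (2 * Et t)) * ‖gradient (fun x' => f (x', y t)) (x t)‖ ^ 2)
    (h3 : ∀ t, f (x (t + 1), y (t + 1)) ≤ f (x (t + 1), y t))
    (hbdd : ∃ B : ℝ, ∀ p : E × F, B ≤ f p) :
    Filter.Tendsto
      (fun t =>
        Real.sqrt
          (‖gradient (fun x' => f (x', y t)) (x t)‖ ^ 2 +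
            ‖gradient (fun y' => f (x t, y')) (y t)‖ ^ 2))
      Filter.atTop (nhds 0) :=
  two_block_gradient_tendsto_zero_general f x y Et Estar hE h1 h2 h3 hbdd
end

section
/- Let (x_t, y_t) be sequences in E and F respectively and E_t a sequence of reals with 0 < E_t ≤ E* for all t and a fixed E* > 0. Suppose for every t ≥ 0: (i) ∇_y f(x_t, y_t) = 0, (ii) f(x_t, y_t) − f(x_{t+1}, y_t) ≥ (1/(2·E_t))·‖∇_x f(x_t, y_t)‖², and (iii) f(x_{t+1}, y_{t+1}) ≤ f(x_{t+1}, y_t). Assume moreover that f is bounded from below and that the full gradient map (x,y) ↦ ∇ f(x,y) is continuous. Then every limit point of the sequence (x_t, y_t) is a stationary point of f: if a subsequence (x_{t_k}, y_{t_k}) converges to (x*, y*), then ∇ f(x*, y*) = 0. -/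
/-- Limit-point stationarity conclusion of Theorem 1: every limit point of
the coordinate-descent iterates is a stationary point of `f`. -/
theorem two_block_limit_point_stationary
    {E F : Type*} [NormedAddCommGroup E] [InnerProductSpace ℝ E] [CompleteSpace E]
    [NormedAddCommGroup F] [InnerProductSpace ℝ F] [CompleteSpace F]
    (f : E × F → ℝ) (hf : Differentiable ℝ f)
    (x : ℕ → E) (y : ℕ → F) (Et : ℕ → ℝ)
    (Estar : ℝ) (hEstar : 0 < Estar)
    (hE : ∀ t, 0 < Et t ∧ Et t ≤ Estar)
    (h1 : ∀ t, gradient (fun y' => f (x t, y')) (y t) = 0)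
    (h2 : ∀ t, f (x t, y t) - f (x (t + 1), y t) ≥
      (1 / (2 * Et t)) * ‖gradient (fun x' => f (x', y t)) (x t)‖ ^ 2)
    (h3 : ∀ t, f (x (t + 1), y (t + 1)) ≤ f (x (t + 1), y t))
    (hbdd : ∃ B : ℝ, ∀ p : E × F, B ≤ f p)
    (hgradcont : Continuous fun p : E × F =>
      (gradient (fun x' => f (x', p.2)) p.1, gradient (fun y' => f (p.1, y')) p.2))
    (φ : ℕ → ℕ) (hφ : StrictMono φ) (xstar : E) (ystar : F)
    (hlim : Filter.Tendsto (fun k => (x (φ k), y (φ k))) Filter.atTop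
      (nhds (xstar, ystar))) :
    gradient (fun x' => f (x', ystar)) xstar = 0 ∧
      gradient (fun y' => f (xstar, y')) ystar = 0 := by
  set g : ℕ → E := fun t => gradient (fun x' => f (x', y t)) (x t) with hg
  set a : ℕ → ℝ := fun t => f (x t, y t) with ha
  -- the gradient map along the subsequence tends to the gradients at the limit point
  have hcomp : Filter.Tendsto
      (fun k => (gradient (fun x' => f (x', y (φ k))) (x (φ k)),
        gradient (fun y' => f (x (φ k), y')) (y (φ k)))) Filter.atTop
      (nhds (gradient (fun x' => f (x', ystar)) xstar,
        gradient (fun y' => f (xstar, y')) ystar)) :=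
    (hgradcont.tendsto _).comp hlim
  constructor
  · -- x-gradient: show g t → 0
    -- step decrease
    have key : ∀ t, (1 / (2 * Estar)) * ‖g t‖ ^ 2 ≤ a t - a (t + 1) := by
      intro t
      have hEt := hE t
      have hstep : (1 / (2 * Et t)) * ‖g t‖ ^ 2 ≤ a t - a (t + 1) := by
        have := h2 t
        have := h3 t
        simp only [ha]
        nlinarith [h2 t, h3 t]
      have hle : (1 / (2 * Estar)) * ‖g t‖ ^ 2 ≤ (1 / (2 * Et t)) * ‖g t‖ ^ 2 := by
        have : (1 : ℝ) / (2 * Estar) ≤ 1 / (2 * Et t) := by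
          apply one_div_le_one_div_of_le (by linarith [hEt.1]) (by linarith [hEt.2])
        nlinarith [sq_nonneg ‖g t‖]
      linarith
    have hanti : Antitone a := antitone_nat_of_succ_le fun t => by
      have h0 : 0 ≤ (1 / (2 * Estar)) * ‖g t‖ ^ 2 :=
        mul_nonneg (by positivity) (sq_nonneg _)
      linarith [key t]
    obtain ⟨B, hB⟩ := hbdd
    have hbdd' : BddBelow (Set.range a) := ⟨B, by rintro _ ⟨t, rfl⟩; exact hB _⟩
    have haconv : Filter.Tendsto a Filter.atTop (nhds (⨅ t, a t)) :=
      tendsto_atTop_ciInf hanti hbdd'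
    have haconv' : Filter.Tendsto (fun t => a (t + 1)) Filter.atTop (nhds (⨅ t, a t)) :=
      haconv.comp (Filter.tendsto_add_atTop_nat 1)
    have hdiff : Filter.Tendsto (fun t => a t - a (t + 1)) Filter.atTop (nhds 0) := by
      simpa using haconv.sub haconv'
    have hsq : Filter.Tendsto (fun t => ‖g t‖ ^ 2) Filter.atTop (nhds 0) := by
      apply squeeze_zero (fun t => sq_nonneg _) (fun t => ?_)
        (by simpa using hdiff.const_mul (2 * Estar))
      have hk := key t
      have h2E : (0 : ℝ) < 2 * Estar := by linarith
      rw [div_mul_eq_mul_div, one_mul, div_le_iff₀ h2E] at hk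
      linarith [hk, mul_comm (a t - a (t + 1)) (2 * Estar)]
    have hnorm : Filter.Tendsto (fun t => ‖g t‖) Filter.atTop (nhds 0) := by
      have := hsq.sqrt
      simpa [Real.sqrt_sq (norm_nonneg _)] using this
    have hg0 : Filter.Tendsto g Filter.atTop (nhds 0) :=
      tendsto_zero_iff_norm_tendsto_zero.2 hnorm
    have hg0' : Filter.Tendsto (fun k => g (φ k)) Filter.atTop (nhds 0) :=
      hg0.comp hφ.tendsto_atTop
    have := (continuous_fst.tendsto _).comp hcomp
    exact tendsto_nhds_unique this hg0'
  · have h0 : Filter.Tendsto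
        (fun k => gradient (fun y' => f (x (φ k), y')) (y (φ k))) Filter.atTop
        (nhds (0 : F)) := by
      simpa [h1] using tendsto_const_nhds (x := (0 : F)) (f := Filter.atTop (α := ℕ))
    have := (continuous_snd.tendsto _).comp hcomp
    exact tendsto_nhds_unique this h0
end
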